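/- Let r ∈ ℝ^N, Z ∈ ℝ^{N×k}, λ₁ > 0, λ₂ > 0, and set a = Zᵀr. Then θ = 0 minimizes f(θ) = (1/2)‖r − Zθ‖₂² + λ₁‖θ‖₂ + λ₂‖θ‖₁ over θ ∈ ℝ^k if and only if there exist vectors s, t ∈ ℝ^k with ‖s‖₂ ≤ 1 and t_j ∈ [−1,1] for all j such that a_j = λ₁ s_j + λ₂ t_j for every j. -/

import Mathlib

/-!
Writing `p(θ) = λ₁‖θ‖₂ + λ₂‖θ‖₁`, we have `f(θ) - f(0) = -⟪a, θ⟫ + ½‖Zθ‖₂² + p(θ)`. Since `p` is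
positively homogeneous, applying this to `εθ`, dividing by `ε` and letting `ε → 0⁺` shows that `0`
minimizes `f` iff `⟪a, θ⟫ ≤ p(θ)` for all `θ`.
This inequality follows from `a = λ₁ s + λ₂ t` by Cauchy–Schwarz and `|t_j| ≤ 1`. Conversely,
let `t = clamp(a/λ₂)` and let `u = a - λ₂ t` be the soft-thresholding of `a`; then
`a_j u_j = u_j² + λ₂|u_j|`, so testing with `θ = u` gives `‖u‖₂² ≤ λ₁‖u‖₂`, and `s = u/λ₁` works.
-/

/-- Euclidean norm of a vector in ℝ^n. -/
noncomputable def norm2 {n : ℕ} (v : Fin n → ℝ) : ℝ :=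
  Real.sqrt (∑ i, v i ^ 2)

open Matrix Filter Topology

lemma norm2_nonneg {n : ℕ} (v : Fin n → ℝ) : 0 ≤ norm2 v := Real.sqrt_nonneg _

lemma norm2_sq {n : ℕ} (v : Fin n → ℝ) : norm2 v ^ 2 = v ⬝ᵥ v := by
  rw [norm2, Real.sq_sqrt (Finset.sum_nonneg fun i _ => sq_nonneg _)]
  simp only [dotProduct, sq]

lemma norm2_smul {n : ℕ} (c : ℝ) (v : Fin n → ℝ) : norm2 (c • v) = |c| * norm2 v := by
  simp only [norm2, Pi.smul_apply, smul_eq_mul, mul_pow, ← Finset.mul_sum]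
  rw [Real.sqrt_mul (sq_nonneg c), Real.sqrt_sq_eq_abs]

lemma dotProduct_le_norm2_mul_norm2 {n : ℕ} (u v : Fin n → ℝ) : u ⬝ᵥ v ≤ norm2 u * norm2 v :=
  Real.sum_mul_le_sqrt_mul_sqrt _ u v

lemma sum_abs_smul {n : ℕ} (c : ℝ) (v : Fin n → ℝ) : ∑ j, |(c • v) j| = |c| * ∑ j, |v j| := by
  simp only [Pi.smul_apply, smul_eq_mul, abs_mul, Finset.mul_sum]

lemma norm2_sub_mulVec_sq {N k : ℕ} (r : Fin N → ℝ) (Z : Matrix (Fin N) (Fin k) ℝ)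
    (θ : Fin k → ℝ) :
    norm2 (r - Z *ᵥ θ) ^ 2 = norm2 r ^ 2 - 2 * (Zᵀ *ᵥ r ⬝ᵥ θ) + norm2 (Z *ᵥ θ) ^ 2 := by
  simp only [norm2_sq, sub_dotProduct, dotProduct_sub, mulVec_transpose, ← dotProduct_mulVec,
    dotProduct_comm (Z *ᵥ θ) r]
  ring

lemma le_of_forall_pos_le_mul_add {x C D : ℝ} (h : ∀ ε > 0, x ≤ ε * D + C) : x ≤ C := by
  have hcont : Continuous fun ε : ℝ => ε * D + C := by fun_prop
  have hlim : Tendsto (fun ε : ℝ => ε * D + C) (𝓝[>] 0) (𝓝 C) :=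
    tendsto_nhdsWithin_of_tendsto_nhds (hcont.tendsto' 0 C (by simp))
  exact ge_of_tendsto hlim (eventually_nhdsWithin_of_forall h)

lemma forall_objective_zero_le_iff {N k : ℕ} (r : Fin N → ℝ) (Z : Matrix (Fin N) (Fin k) ℝ)
    (p : (Fin k → ℝ) → ℝ) (hp : ∀ ε > 0, ∀ θ, p (ε • θ) = ε * p θ) :
    (∀ θ, (1 / 2) * norm2 (r - Z *ᵥ 0) ^ 2 + p 0 ≤ (1 / 2) * norm2 (r - Z *ᵥ θ) ^ 2 + p θ)
      ↔ ∀ θ, Zᵀ *ᵥ r ⬝ᵥ θ ≤ p θ := by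
  have hp0 : p 0 = 0 := by
    have := hp 2 two_pos 0
    rw [smul_zero] at this
    linarith
  simp only [mulVec_zero, sub_zero, hp0, add_zero, norm2_sub_mulVec_sq]
  constructor
  · intro hmin θ
    refine le_of_forall_pos_le_mul_add (D := (1 / 2) * norm2 (Z *ᵥ θ) ^ 2) fun ε hε => ?_
    have h := hmin (ε • θ)
    rw [mulVec_smul, norm2_smul, dotProduct_smul, hp ε hε, smul_eq_mul, mul_pow, sq_abs] at h
    nlinarith
  · intro hsub θ
    nlinarith [hsub θ, sq_nonneg (norm2 (Z *ᵥ θ))]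

def clampUnit (x : ℝ) : ℝ := max (-1) (min 1 x)

lemma clampUnit_mem_Icc (x : ℝ) : clampUnit x ∈ Set.Icc (-1 : ℝ) 1 :=
  ⟨le_max_left _ _, max_le (by norm_num) (min_le_left _ _)⟩

lemma sub_clampUnit_mul_clampUnit (x : ℝ) :
    (x - clampUnit x) * clampUnit x = |x - clampUnit x| := by
  unfold clampUnit
  rcases le_total x (-1) with hx | hx
  · rw [min_eq_right (by linarith), max_eq_left hx, abs_of_nonpos (by linarith)]
    ring
  rcases le_total x 1 with hx' | hx'
  · simp [min_eq_right hx', max_eq_right hx]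
  · rw [min_eq_left hx', max_eq_right (by norm_num), abs_of_nonneg (by linarith)]
    ring

lemma dotProduct_le_sum_abs {n : ℕ} {t : Fin n → ℝ} (ht : ∀ j, t j ∈ Set.Icc (-1 : ℝ) 1)
    (θ : Fin n → ℝ) : t ⬝ᵥ θ ≤ ∑ j, |θ j| := by
  refine Finset.sum_le_sum fun j _ => ?_
  calc t j * θ j ≤ |t j| * |θ j| := (le_abs_self _).trans (abs_mul _ _).le
    _ ≤ |θ j| := mul_le_of_le_one_left (abs_nonneg _) (abs_le.mpr (ht j))

lemma dotProduct_le_of_eq_add {k : ℕ} {a s t : Fin k → ℝ} {lam1 lam2 : ℝ}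
    (hlam1 : 0 ≤ lam1) (hlam2 : 0 ≤ lam2) (hs : norm2 s ≤ 1)
    (ht : ∀ j, t j ∈ Set.Icc (-1 : ℝ) 1) (hst : ∀ j, a j = lam1 * s j + lam2 * t j)
    (θ : Fin k → ℝ) : a ⬝ᵥ θ ≤ lam1 * norm2 θ + lam2 * ∑ j, |θ j| := by
  have ha : a = lam1 • s + lam2 • t := funext hst
  have hsθ : s ⬝ᵥ θ ≤ norm2 θ :=
    (dotProduct_le_norm2_mul_norm2 s θ).trans (mul_le_of_le_one_left (norm2_nonneg θ) hs)
  rw [ha, add_dotProduct, smul_dotProduct, smul_dotProduct, smul_eq_mul, smul_eq_mul]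
  gcongr
  exact dotProduct_le_sum_abs ht θ

lemma exists_eq_add_of_forall_dotProduct_le {k : ℕ} {a : Fin k → ℝ} {lam1 lam2 : ℝ}
    (hlam1 : 0 < lam1) (hlam2 : 0 < lam2)
    (h : ∀ θ, a ⬝ᵥ θ ≤ lam1 * norm2 θ + lam2 * ∑ j, |θ j|) :
    ∃ s t : Fin k → ℝ, norm2 s ≤ 1 ∧ (∀ j, t j ∈ Set.Icc (-1 : ℝ) 1)
      ∧ ∀ j, a j = lam1 * s j + lam2 * t j := by
  set t : Fin k → ℝ := fun j => clampUnit (a j / lam2)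
  set u : Fin k → ℝ := a - lam2 • t
  have hau : ∀ j, a j * u j = u j * u j + lam2 * |u j| := by
    intro j
    have hy : a j = lam2 * (a j / lam2) := (mul_div_cancel₀ _ hlam2.ne').symm
    have hu : u j = lam2 * (a j / lam2 - t j) := by
      simp only [u, Pi.sub_apply, Pi.smul_apply, smul_eq_mul]
      rw [mul_sub, ← hy]
    rw [hu, abs_mul, abs_of_pos hlam2, ← sub_clampUnit_mul_clampUnit]
    nth_rewrite 1 [hy]
    ring
  have hu : norm2 u ≤ lam1 := by
    have hsq : norm2 u ^ 2 ≤ lam1 * norm2 u := by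
      have := h u
      rw [dotProduct, Finset.sum_congr rfl fun j _ => hau j, Finset.sum_add_distrib,
        ← Finset.mul_sum, ← dotProduct, ← norm2_sq] at this
      linarith
    nlinarith [norm2_nonneg u]
  refine ⟨lam1⁻¹ • u, t, ?_, fun j => clampUnit_mem_Icc _, fun j => ?_⟩
  · rw [norm2_smul, abs_inv, abs_of_pos hlam1]
    exact inv_mul_le_one_of_le₀ hu hlam1.le
  · simp only [u, Pi.smul_apply, Pi.sub_apply, smul_eq_mul]
    field_simp
    ring

lemma forall_dotProduct_le_iff_exists_eq_add {k : ℕ} (a : Fin k → ℝ) {lam1 lam2 : ℝ}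
    (hlam1 : 0 < lam1) (hlam2 : 0 < lam2) :
    (∀ θ, a ⬝ᵥ θ ≤ lam1 * norm2 θ + lam2 * ∑ j, |θ j|)
      ↔ ∃ s t : Fin k → ℝ, norm2 s ≤ 1 ∧ (∀ j, t j ∈ Set.Icc (-1 : ℝ) 1)
          ∧ ∀ j, a j = lam1 * s j + lam2 * t j :=
  ⟨exists_eq_add_of_forall_dotProduct_le hlam1 hlam2, fun ⟨_, _, hs, ht, hst⟩ =>
    dotProduct_le_of_eq_add hlam1.le hlam2.le hs ht hst⟩

/-- With `a = Zᵀr`, the zero vector minimizes the blockwise sparse group lasso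
objective `f(θ) = (1/2)‖r − Zθ‖₂² + λ₁‖θ‖₂ + λ₂‖θ‖₁` if and only if there
exist `s, t ∈ ℝ^k` with `‖s‖₂ ≤ 1`, `t_j ∈ [−1,1]`, and
`a_j = λ₁ s_j + λ₂ t_j` for every `j`. -/
theorem sparse_group_lasso_zero_iff_subgradient (N k : ℕ) (r : Fin N → ℝ)
    (Z : Matrix (Fin N) (Fin k) ℝ) (lam1 lam2 : ℝ)
    (hlam1 : 0 < lam1) (hlam2 : 0 < lam2)
    (a : Fin k → ℝ) (ha : a = Z.transpose.mulVec r) :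
    (∀ θ : Fin k → ℝ,
        (1 / 2) * norm2 (r - Z.mulVec 0) ^ 2 + lam1 * norm2 (0 : Fin k → ℝ)
            + lam2 * ∑ j, |(0 : Fin k → ℝ) j|
          ≤ (1 / 2) * norm2 (r - Z.mulVec θ) ^ 2 + lam1 * norm2 θ
            + lam2 * ∑ j, |θ j|)
      ↔ ∃ s t : Fin k → ℝ, norm2 s ≤ 1 ∧ (∀ j, t j ∈ Set.Icc (-1 : ℝ) 1)
          ∧ ∀ j, a j = lam1 * s j + lam2 * t j := by
  have hpenalty : ∀ ε > 0, ∀ θ : Fin k → ℝ,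
      lam1 * norm2 (ε • θ) + lam2 * ∑ j, |(ε • θ) j|
        = ε * (lam1 * norm2 θ + lam2 * ∑ j, |θ j|) := by
    intro ε hε θ
    rw [norm2_smul, sum_abs_smul, abs_of_pos hε]
    ring
  simp only [add_assoc]
  rw [← forall_dotProduct_le_iff_exists_eq_add a hlam1 hlam2, ha]
  exact forall_objective_zero_le_iff r Z (fun θ => lam1 * norm2 θ + lam2 * ∑ j, |θ j|) hpenalty
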